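/- For every γ > 0 and s ∈ ℝ^p, letting u = prox_{γh}(s) and v = prox_{γg}(s), the sandwich inequality φ(v) + (1/(2γ))‖v − u‖² ≤ φ_γ(s) ≤ φ(u) − (1/(2γ))‖v − u‖² holds. -/

import Mathlib

/-!
The proximal point `u` of a convex `f` at `s` satisfies `(s - u) / γ ∈ ∂f(u)`, which, expanded
with the polarization identity, is the quadratic growth
`f u + (‖u - s‖² + ‖z - u‖²) / (2γ) ≤ f z + ‖z - s‖² / (2γ)` for every `z`.
The Moreau envelope at `s` is the prox objective at the proximal point, so the growth of `h` at
`z = v` gives the lower bound on `φ_γ(s)` and the growth of `g` at `z = u` the upper bound.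
-/

open scoped InnerProductSpace
noncomputable section

/-- `ℝ^p` as a Euclidean space. -/
abbrev Euc (p : ℕ) := EuclideanSpace ℝ (Fin p)

variable {p : ℕ}

/-- `f : ℝ^p → ℝ ∪ {∞}` (modelled with `EReal` values never equal to `-∞`) is proper. -/
def ProperFun (f : Euc p → EReal) : Prop :=
  (∀ x, f x ≠ ⊥) ∧ (∃ x, f x ≠ ⊤)

/-- Convexity for extended-real-valued functions. -/
def ConvexFun (f : Euc p → EReal) : Prop :=
  ∀ x y : Euc p, ∀ t : ℝ, 0 ≤ t → t ≤ 1 →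
    f (t • x + (1 - t) • y) ≤ (t : EReal) * f x + ((1 - t : ℝ) : EReal) * f y

/-- The convex subdifferential `∂f(x)`. -/
def Subdiff (f : Euc p → EReal) (x : Euc p) : Set (Euc p) :=
  {v | ∀ z, f x + ((⟪v, z - x⟫_ℝ : ℝ) : EReal) ≤ f z}

/-- `u` minimizes `w ↦ f(w) + (1/(2γ))‖w − x‖²`. -/
def ProxObjMin (f : Euc p → EReal) (γ : ℝ) (x u : Euc p) : Prop :=
  ∀ w, f u + ((1/(2*γ) * ‖u - x‖^2 : ℝ) : EReal) ≤ f w + ((1/(2*γ) * ‖w - x‖^2 : ℝ) : EReal)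

/-- `u = prox_{γf}(x)`: `u` is the unique minimizer of `w ↦ f(w) + (1/(2γ))‖w − x‖²`. -/
def IsProxOf (f : Euc p → EReal) (γ : ℝ) (x u : Euc p) : Prop :=
  ProxObjMin f γ x u ∧ ∀ w, ProxObjMin f γ x w → w = u

/-- The Moreau envelope `f^γ(x) = inf_w { f(w) + (1/(2γ))‖w − x‖² }`, as an extended real. -/
def moreau (f : Euc p → EReal) (γ : ℝ) (x : Euc p) : EReal :=
  ⨅ w : Euc p, f w + ((1/(2*γ) * ‖w - x‖^2 : ℝ) : EReal)

/-- The (real-valued) Moreau envelope. -/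
def moreauR (f : Euc p → EReal) (γ : ℝ) (x : Euc p) : ℝ := (moreau f γ x).toReal

/-- The DC envelope `φ_γ = g^γ − h^γ`. -/
def dce (g h : Euc p → EReal) (γ : ℝ) (s : Euc p) : ℝ := moreauR g γ s - moreauR h γ s

/-- The DC function `φ = g − h`, with the convention `∞ − ∞ = ∞`. -/
def dcVal (g h : Euc p → EReal) (x : Euc p) : EReal :=
  if g x = ⊤ then ⊤ else g x - h x

open Filter Topology in
theorem le_of_forall_mem_Ioc_le_add_mul {a b D : ℝ}
    (h : ∀ t ∈ Set.Ioc (0 : ℝ) 1, a ≤ b + t * D) : a ≤ b := by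
  have hlim : Tendsto (fun t : ℝ => b + t * D) (𝓝[>] 0) (𝓝 b) := by
    have : Tendsto (fun t : ℝ => b + t * D) (𝓝 0) (𝓝 (b + 0 * D)) :=
      (continuous_const.add (continuous_id.mul continuous_const)).tendsto 0
    simpa using this.mono_left nhdsWithin_le_nhds
  exact ge_of_tendsto hlim (mem_of_superset (Ioc_mem_nhdsGT one_pos) h)

namespace ProxObjMin

variable {f : Euc p → EReal} {γ : ℝ} {s u : Euc p}

theorem ne_top (hf : ProperFun f) (hu : ProxObjMin f γ s u) : f u ≠ ⊤ := by
  obtain ⟨hbot, x, hx⟩ := hf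
  intro htop
  have hxu := hu x
  lift f x to ℝ using ⟨hx, hbot x⟩ with fx
  rw [htop, EReal.top_add_coe, ← EReal.coe_add, top_le_iff] at hxu
  exact EReal.coe_ne_top _ hxu

theorem exists_eq_coe (hf : ProperFun f) (hu : ProxObjMin f γ s u) : ∃ a : ℝ, f u = a :=
  ⟨(f u).toReal, (EReal.coe_toReal (hu.ne_top hf) (hf.1 u)).symm⟩

theorem moreau_eq (hu : ProxObjMin f γ s u) :
    moreau f γ s = f u + ((1/(2*γ) * ‖u - s‖^2 : ℝ) : EReal) :=
  le_antisymm (iInf_le _ u) (le_iInf hu)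

theorem moreauR_eq {a : ℝ} (hu : ProxObjMin f γ s u) (ha : f u = a) :
    moreauR f γ s = a + 1/(2*γ) * ‖u - s‖^2 := by
  rw [moreauR, hu.moreau_eq, ha, ← EReal.coe_add, EReal.toReal_coe]

/-- Compare the objective at `u` with its value at `t • z + (1 - t) • u`, bound the latter by
convexity, divide by `t` and let `t → 0⁺`. -/
theorem mem_subdiff (hf : ProperFun f) (hconv : ConvexFun f)
    (hu : ProxObjMin f γ s u) : (1/γ) • (s - u) ∈ Subdiff f u := by
  intro z
  obtain ⟨a, ha⟩ := hu.exists_eq_coe hf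
  induction hz : f z using EReal.rec with
  | bot => exact absurd hz (hf.1 z)
  | top => exact le_top
  | coe b =>
    rw [ha, ← EReal.coe_add, EReal.coe_le_coe_iff, real_inner_smul_left]
    refine le_of_forall_mem_Ioc_le_add_mul (D := 1/(2*γ) * ‖z - u‖^2)
      fun t ⟨ht0, ht1⟩ => ?_
    have hstep := (hu (t • z + (1 - t) • u)).trans
      (add_le_add_left (hconv z u t ht0.le ht1) _)
    rw [ha, hz] at hstep
    norm_cast at hstep
    have hexpand : ‖t • z + (1 - t) • u - s‖^2
        = ‖u - s‖^2 + 2 * t * ⟪u - s, z - u⟫_ℝ + t^2 * ‖z - u‖^2 := by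
      rw [show t • z + (1 - t) • u - s = (u - s) + t • (z - u) by module, norm_add_sq_real,
        real_inner_smul_right, norm_smul, Real.norm_of_nonneg ht0.le]
      ring
    rw [hexpand] at hstep
    have hinner : ⟪s - u, z - u⟫_ℝ = - ⟪u - s, z - u⟫_ℝ := by
      rw [← inner_neg_left, neg_sub]
    refine le_of_mul_le_mul_left ?_ ht0
    linear_combination hstep + (t / γ) * hinner

theorem add_sq_le (hf : ProperFun f) (hconv : ConvexFun f)
    (hu : ProxObjMin f γ s u) (z : Euc p) :
    f u + ((1/(2*γ) * (‖u - s‖^2 + ‖z - u‖^2) : ℝ) : EReal) ≤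
      f z + ((1/(2*γ) * ‖z - s‖^2 : ℝ) : EReal) := by
  have hsub := hu.mem_subdiff hf hconv z
  have hpolar : 1/(2*γ) * (‖u - s‖^2 + ‖z - u‖^2) =
      ⟪(1/γ) • (s - u), z - u⟫_ℝ + 1/(2*γ) * ‖z - s‖^2 := by
    have hsplit : ‖z - s‖^2 = ‖z - u‖^2 - 2 * ⟪z - u, s - u⟫_ℝ + ‖s - u‖^2 := by
      rw [← norm_sub_sq_real, sub_sub_sub_cancel_right]
    rw [hsplit, real_inner_smul_left, norm_sub_rev u s, real_inner_comm]
    ring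
  rw [hpolar, EReal.coe_add, ← add_assoc]
  exact add_le_add_left hsub _

end ProxObjMin

section Sandwich

variable {g h : Euc p → EReal} {γ : ℝ} {s u v : Euc p}

theorem dcVal_add_sq_le_dce (hg : ProperFun g) (hh : ProperFun h) (hh_convex : ConvexFun h)
    (hu : ProxObjMin h γ s u) (hv : ProxObjMin g γ s v) :
    dcVal g h v + ((1/(2*γ) * ‖v - u‖^2 : ℝ) : EReal) ≤
      ((dce g h γ s : ℝ) : EReal) := by
  obtain ⟨a, ha⟩ := hv.exists_eq_coe hg
  obtain ⟨b, hb⟩ := hu.exists_eq_coe hh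
  have hgrowth := hu.add_sq_le hh hh_convex v
  rw [hb] at hgrowth
  rw [dce, hv.moreauR_eq ha, hu.moreauR_eq hb, dcVal, if_neg (ha ▸ EReal.coe_ne_top a), ha]
  induction hhv : h v using EReal.rec with
  | bot => exact absurd hhv (hh.1 v)
  | top => simp
  | coe c =>
    rw [hhv] at hgrowth
    norm_cast at hgrowth ⊢
    rw [mul_add] at hgrowth
    linarith

theorem dce_le_dcVal_sub_sq (hg : ProperFun g) (hg_convex : ConvexFun g) (hh : ProperFun h)
    (hu : ProxObjMin h γ s u) (hv : ProxObjMin g γ s v) :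
    ((dce g h γ s : ℝ) : EReal) ≤
      dcVal g h u - ((1/(2*γ) * ‖v - u‖^2 : ℝ) : EReal) := by
  obtain ⟨a, ha⟩ := hv.exists_eq_coe hg
  obtain ⟨b, hb⟩ := hu.exists_eq_coe hh
  have hgrowth := hv.add_sq_le hg hg_convex u
  rw [ha] at hgrowth
  rw [dce, hv.moreauR_eq ha, hu.moreauR_eq hb, dcVal]
  induction hgu : g u using EReal.rec with
  | bot => exact absurd hgu (hg.1 u)
  | top => rw [if_pos rfl, EReal.top_sub_coe]; exact le_top
  | coe c =>
    rw [hgu] at hgrowth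
    rw [if_neg (EReal.coe_ne_top c), hb]
    norm_cast at hgrowth ⊢
    rw [mul_add, norm_sub_rev u v] at hgrowth
    linarith

end Sandwich

theorem statement4
    (g h : Euc p → EReal)
    (hg_proper : ProperFun g) (hg_convex : ConvexFun g)
    (hh_proper : ProperFun h) (hh_convex : ConvexFun h)
    (γ : ℝ) (s u v : Euc p)
    (hu : IsProxOf h γ s u) (hv : IsProxOf g γ s v) :
    dcVal g h v + ((1/(2*γ) * ‖v - u‖^2 : ℝ) : EReal) ≤ ((dce g h γ s : ℝ) : EReal) ∧
      ((dce g h γ s : ℝ) : EReal) ≤ dcVal g h u - ((1/(2*γ) * ‖v - u‖^2 : ℝ) : EReal) :=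
  ⟨dcVal_add_sq_le_dce hg_proper hh_proper hh_convex hu.1 hv.1,
    dce_le_dcVal_sub_sq hg_proper hg_convex hh_proper hu.1 hv.1⟩
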